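/- Let f be an n×n 0-1 matrix which is the matrix of a partial transformation, and suppose f^m equals the block diagonal matrix diag(I_k, 0_{n-k}) for some m ≥ 1. Then f is block diagonal, f = diag(σ, τ), where σ is a k×k permutation matrix and τ is an (n-k)×(n-k) nilpotent matrix. -/
import Mathlib


/-- The 0–1 matrix of a partial transformation `g` : `(i,j)` entry is `1` iff `g i = some j`. -/
def ptMatrix {α : Type*} [DecidableEq α] (g : α → Option α) : Matrix α α ℤ :=
  fun i j => if g i = some j then 1 else 0

/-- The 0–1 matrix of a permutation `σ`. -/
def permMatrix' {β : Type*} [DecidableEq β] (σ : Equiv.Perm β) : Matrix β β ℤ :=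
  fun i j => if σ i = j then 1 else 0

def iterG {α : Type*} (g : α → Option α) : ℕ → α → Option α
  | 0 => some
  | n+1 => fun i => (g i).bind (iterG g n)

lemma iterG_succ {α : Type*} (g : α → Option α) (n : ℕ) (i : α) :
    iterG g (n+1) i = (g i).bind (iterG g n) := rfl

lemma iterG_succ' {α : Type*} (g : α → Option α) (n : ℕ) (i : α) :
    iterG g (n+1) i = (iterG g n i).bind g := by
  induction n generalizing i with
  | zero => simp [iterG]
  | succ n ih =>
    show (g i).bind (iterG g (n+1)) = ((g i).bind (iterG g n)).bind g
    rw [Option.bind_assoc]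
    exact Option.bind_congr fun a _ => ih a

lemma ptMatrix_mul {α : Type*} [DecidableEq α] [Fintype α] (g h : α → Option α) :
    ptMatrix g * ptMatrix h = ptMatrix (fun i => (g i).bind h) := by
  ext i j
  simp only [Matrix.mul_apply, ptMatrix]
  rcases Option.eq_none_or_eq_some (g i) with hgi | ⟨a, hgi⟩
  · simp [hgi]
  · simp only [hgi, Option.bind_some, Option.some.injEq]
    rw [Finset.sum_eq_single a]
    · simp
    · intro b _ hb; simp [Ne.symm hb]
    · simp

lemma ptMatrix_pow {α : Type*} [DecidableEq α] [Fintype α] (g : α → Option α) (m : ℕ) :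
    (ptMatrix g) ^ m = ptMatrix (iterG g m) := by
  induction m with
  | zero => ext i j; simp [ptMatrix, iterG, Matrix.one_apply, eq_comm]
  | succ n ih =>
    rw [pow_succ', ih, ptMatrix_mul]
    rfl

lemma fromBlocks_pow {n p : Type*} [Fintype n] [Fintype p] [DecidableEq n] [DecidableEq p]
    (A : Matrix n n ℤ) (D : Matrix p p ℤ) (m : ℕ) :
    (Matrix.fromBlocks A 0 0 D) ^ m = Matrix.fromBlocks (A ^ m) 0 0 (D ^ m) := by
  induction m with
  | zero => simp [Matrix.fromBlocks_one]
  | succ n ih => rw [pow_succ, pow_succ, pow_succ, ih, Matrix.fromBlocks_multiply]; simp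

/-- If `f` is the matrix of a partial transformation on `k + l` points and some power
`f^m` (`m ≥ 1`) equals the block diagonal matrix `diag(I_k, 0_l)`, then `f` itself is
block diagonal, `f = diag(σ, τ)` with `σ` a `k×k` permutation matrix and `τ` an
`l×l` nilpotent matrix. -/
theorem partialTransformation_block_decomposition (k l m : ℕ) (hm : 1 ≤ m)
    (f : Matrix (Fin k ⊕ Fin l) (Fin k ⊕ Fin l) ℤ)
    (hf : ∃ g : Fin k ⊕ Fin l → Option (Fin k ⊕ Fin l), f = ptMatrix g)
    (hpow : f ^ m = Matrix.fromBlocks 1 0 0 0) :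
    ∃ (σ : Equiv.Perm (Fin k)) (τ : Matrix (Fin l) (Fin l) ℤ),
      IsNilpotent τ ∧ f = Matrix.fromBlocks (permMatrix' σ) 0 0 τ := by
  obtain ⟨g, rfl⟩ := hf
  obtain ⟨m', rfl⟩ : ∃ m', m = m' + 1 := ⟨m - 1, (Nat.succ_pred_eq_of_pos hm).symm⟩
  have hpow' := hpow
  rw [ptMatrix_pow] at hpow'
  -- entry facts
  have hA : ∀ i : Fin k, iterG g (m' + 1) (Sum.inl i) = some (Sum.inl i) := by
    intro i
    have h1 := congrFun (congrFun hpow' (Sum.inl i)) (Sum.inl i)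
    simp only [ptMatrix, Matrix.fromBlocks_apply₁₁, Matrix.one_apply_eq] at h1
    by_contra hc
    rw [if_neg hc] at h1
    exact one_ne_zero h1.symm
  have hB : ∀ j : Fin l, iterG g (m' + 1) (Sum.inr j) = none := by
    intro j
    rcases Option.eq_none_or_eq_some (iterG g (m' + 1) (Sum.inr j)) with h | ⟨x, hx⟩
    · exact h
    · exfalso
      have h1 := congrFun (congrFun hpow' (Sum.inr j)) x
      rcases x with x | x <;>
        simp [ptMatrix, hx, Matrix.fromBlocks] at h1
  -- g maps the inl part into the inl part
  have hstep : ∀ i : Fin k, ∃ i', g (Sum.inl i) = some (Sum.inl i') := by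
    intro i
    have hAi := hA i
    rcases Option.eq_none_or_eq_some (g (Sum.inl i)) with hg | ⟨x, hx⟩
    · rw [iterG_succ, hg] at hAi; simp at hAi
    · have hx' : iterG g m' x = some (Sum.inl i) := by
        have h2 := hAi
        rw [iterG_succ, hx, Option.bind_some] at h2
        exact h2
      have hxm : iterG g (m' + 1) x = some x := by
        rw [iterG_succ', hx', Option.bind_some, ← hx]
      cases x with
      | inl i' => exact ⟨i', hx⟩
      | inr j => rw [hB j] at hxm; simp at hxm
  choose σ0 hσ0 using hstep
  have hinj : Function.Injective σ0 := by
    intro a b hab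
    have h1 : iterG g (m' + 1) (Sum.inl a) = iterG g (m' + 1) (Sum.inl b) := by
      rw [iterG_succ, iterG_succ, hσ0 a, hσ0 b, hab]
    rw [hA a, hA b] at h1
    exact Sum.inl.inj (Option.some.inj h1)
  let σ : Equiv.Perm (Fin k) := Equiv.ofBijective σ0 (Finite.injective_iff_bijective.mp hinj)
  -- iterates stay in the inl part
  have hlem : ∀ n (i : Fin k), ∃ i', iterG g n (Sum.inl i) = some (Sum.inl i') := by
    intro n
    induction n with
    | zero => exact fun i => ⟨i, rfl⟩
    | succ n ih =>
      intro i
      obtain ⟨i', h'⟩ := ih (σ0 i)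
      exact ⟨i', by rw [iterG_succ, hσ0 i, Option.bind_some, h']⟩
  -- g maps the inr part into the inr part (or is undefined)
  have hrstep : ∀ j : Fin l, g (Sum.inr j) = none ∨ ∃ j', g (Sum.inr j) = some (Sum.inr j') := by
    intro j
    rcases Option.eq_none_or_eq_some (g (Sum.inr j)) with h | ⟨x, hx⟩
    · exact Or.inl h
    cases x with
    | inr j' => exact Or.inr ⟨j', hx⟩
    | inl i' =>
      exfalso
      obtain ⟨i'', h''⟩ := hlem m' i'
      have := hB j
      rw [iterG_succ, hx, Option.bind_some, h''] at this
      exact Option.some_ne_none _ this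
  have heq : ptMatrix g = Matrix.fromBlocks (permMatrix' σ)
      0 0 (Matrix.of fun a b => ptMatrix g (Sum.inr a) (Sum.inr b)) := by
    ext x y
    cases x with
    | inl i =>
      cases y with
      | inl i' =>
        simp only [Matrix.fromBlocks_apply₁₁, ptMatrix, permMatrix', hσ0 i,
          Option.some.injEq, Sum.inl.injEq]
        rfl
      | inr j' =>
        simp [ptMatrix, hσ0 i, Matrix.fromBlocks]
    | inr j =>
      cases y with
      | inl i' =>
        rcases hrstep j with h | ⟨j'', h⟩ <;> simp [ptMatrix, h, Matrix.fromBlocks]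
      | inr j' => simp [Matrix.fromBlocks]
  refine ⟨σ, _, ⟨m' + 1, ?_⟩, heq⟩
  have h3 : Matrix.fromBlocks ((permMatrix' σ) ^ (m' + 1)) 0 0
      ((Matrix.of fun a b => ptMatrix g (Sum.inr a) (Sum.inr b)) ^ (m' + 1)) =
      Matrix.fromBlocks 1 0 0 0 := by
    rw [← fromBlocks_pow, ← heq, hpow]
  have h4 := congrArg Matrix.toBlocks₂₂ h3
  simpa [Matrix.toBlocks_fromBlocks₂₂] using h4
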